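/- Let (X, ω) be a symplectic vector space, V a finite-dimensional subspace, and (λ, μ) a Fredholm pair of Lagrangian subspaces of index 0. If V + λ + μ = X and V ∩ λ = {0}, then V^ω + λ = X. -/
import Mathlib


universe u

/-- The annihilator `λ^ω = {y ∈ X : ω(x,y) = 0 for all x ∈ λ}` of a subspace of a
complex vector space with a sesquilinear form `ω` (linear in the first,
conjugate-linear in the second variable). -/
noncomputable def ann {X : Type*} [AddCommGroup X] [Module ℂ X]
    (ω : X →ₗ[ℂ] X →ₗ⋆[ℂ] ℂ) (l : Submodule ℂ X) : Submodule ℂ X :=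
  ⨅ x ∈ l, LinearMap.ker (ω x)

lemma mem_ann {X : Type*} [AddCommGroup X] [Module ℂ X]
    (ω : X →ₗ[ℂ] X →ₗ⋆[ℂ] ℂ) (l : Submodule ℂ X) (y : X) :
    y ∈ ann ω l ↔ ∀ x ∈ l, ω x y = 0 := by
  simp [ann, Submodule.mem_iInf, LinearMap.mem_ker]

/-- The conjugate-semilinear map `X → Dual ℂ V`, `x ↦ (v ↦ ω v x)`. -/
noncomputable def phiMap {X : Type*} [AddCommGroup X] [Module ℂ X]
    (ω : X →ₗ[ℂ] X →ₗ⋆[ℂ] ℂ) (V : Submodule ℂ X) :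
    X →ₛₗ[starRingEnd ℂ] Module.Dual ℂ V where
  toFun x :=
    { toFun := fun v => ω v.1 x
      map_add' := fun v w => by simp only [Submodule.coe_add, map_add, LinearMap.add_apply]
      map_smul' := fun c v => by
        simp only [Submodule.coe_smul, map_smul, LinearMap.smul_apply, smul_eq_mul,
          RingHom.id_apply] }
  map_add' x y := by
    ext v; simp
  map_smul' c x := by
    ext v; simp

lemma ker_phiMap {X : Type*} [AddCommGroup X] [Module ℂ X]
    (ω : X →ₗ[ℂ] X →ₗ⋆[ℂ] ℂ) (V : Submodule ℂ X) :
    LinearMap.ker (phiMap ω V) = ann ω V := by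
  ext y
  simp only [LinearMap.mem_ker, mem_ann]
  constructor
  · intro h x hx
    have := congrArg (fun f => f ⟨x, hx⟩) h
    simpa [phiMap] using this
  · intro h
    ext v
    simpa [phiMap] using h v.1 v.2

/-- Let `V` be finite-dimensional and `(λ,μ)` a Fredholm pair of
Lagrangian subspaces of index `0`. If `V + λ + μ = X` and `V ∩ λ = 0`, then
`V^ω + λ = X`. -/
theorem ann_sup_lagrangian_eq_top {X : Type*} [AddCommGroup X] [Module ℂ X]
    (ω : X →ₗ[ℂ] X →ₗ⋆[ℂ] ℂ)
    (hskew : ∀ x y, ω y x = - (starRingEnd ℂ) (ω x y))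
    (hnd : ∀ x, (∀ y, ω x y = 0) → x = 0)
    (V l m : Submodule ℂ X) [FiniteDimensional ℂ ↥V]
    (hl : l = ann ω l) (hm : m = ann ω m)
    [FiniteDimensional ℂ ↥(l ⊓ m)] [FiniteDimensional ℂ (X ⧸ (l ⊔ m))]
    (hidx : Module.finrank ℂ ↥(l ⊓ m) = Module.finrank ℂ (X ⧸ (l ⊔ m)))
    (hsum : V ⊔ l ⊔ m = ⊤) (hVl : V ⊓ l = ⊥) :
    ann ω V ⊔ l = ⊤ := by
  classical
  set Φ := phiMap ω V with hΦ
  -- restriction of Φ to l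
  set Ψ : l →ₛₗ[starRingEnd ℂ] Module.Dual ℂ V := Φ.comp (l.subtype : l →ₗ[ℂ] X) with hΨ
  have hrange : LinearMap.range Ψ = ⊤ := by
    have hcoann : (LinearMap.range Ψ).dualCoannihilator = ⊥ := by
      rw [eq_bot_iff]
      intro v hv
      rw [Submodule.mem_dualCoannihilator] at hv
      -- v : V with ω v y = 0 for all y ∈ l (after translating)
      have hvl : (v : X) ∈ l := by
        rw [hl, mem_ann]
        intro y hy
        have := hv (Ψ ⟨y, hy⟩) ⟨⟨y, hy⟩, rfl⟩
        -- this : ω v y = 0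
        have h1 : ω (v : X) y = 0 := by simpa [hΨ, hΦ, phiMap] using this
        rw [hskew]
        simp [h1]
      have : (v : X) ∈ V ⊓ l := ⟨v.2, hvl⟩
      rw [hVl] at this
      simpa using Subtype.ext (by simpa using this)
    have := Subspace.dualCoannihilator_dualAnnihilator_eq
      (W := LinearMap.range Ψ) (K := ℂ) (V := V)
    rw [hcoann] at this
    rw [← this, Submodule.dualAnnihilator_bot]
  rw [eq_top_iff]
  intro x _
  have hx : Φ x ∈ LinearMap.range Ψ := by rw [hrange]; trivial
  obtain ⟨⟨y, hy⟩, hxy⟩ := hx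
  have hker : x - y ∈ LinearMap.ker Φ := by
    rw [LinearMap.mem_ker, map_sub]
    have : Φ y = Φ x := by simpa [hΨ] using hxy
    rw [this, sub_self]
  rw [hΦ, ker_phiMap] at hker
  have : x = (x - y) + y := by abel
  rw [this]
  exact Submodule.add_mem _ (Submodule.mem_sup_left hker) (Submodule.mem_sup_right hy)
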